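/- arXiv:1208.3549 — 4 statements merged into one kernel-verified Lean document; each statement's English description precedes it below -/
import Mathlib

section
/- (Theorem 2, matrix form.) Let p, q, n be positive integers with p + q = n + 1, let N_p, N_q, N_b be natural numbers, and let A ∈ ℝ^{N_q×N_p} and B ∈ ℝ^{N_b×N_p} be arbitrary real matrices (representing the coboundary operator d^{n−p} and the trace operator tr^{n−p} of a simplicial complex). Set r = pq + 1, d_i = (−1)^q Aᵀ and d_b = (−1)^{q−1} Bᵀ. On the space (ℝ^{N_p}×ℝ^{N_q}×ℝ^{N_b}) × (ℝ^{N_p}×ℝ^{N_q}×ℝ^{N_b}) of flow–effort pairs ((f_p,f_q,f_b),(e_p,e_q,e_b)), define the symmetric bilinear form ⟪((f_p¹,f_q¹,f_b¹),(e_p¹,e_q¹,e_b¹)),((f_p²,f_q²,f_b²),(e_p²,e_q²,e_b²))⟫ = (e_p¹ᵀf_p² + e_p²ᵀf_p¹) + (−1)^{q(p−1)}(e_q¹ᵀf_q² + e_q²ᵀf_q¹) + (−1)^{(p−1)(q−1)}(e_b¹ᵀf_b² + e_b²ᵀf_b¹). Then the linear subspace D_d = { ((f_p,f_q,f_b),(e_p,e_q,e_b))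 : f_p = (−1)^r d_i e_q + (−1)^r d_b e_b, f_q = A e_p, f_b = (−1)^p B e_p } satisfies D_d = D_d^⊥, i.e., D_d is a Dirac structure with respect to this pairing. -/
open Matrix

/-- Flow–effort pairs ((f_p,f_q,f_b),(e_p,e_q,e_b)) on ℝ^{N_p}×ℝ^{N_q}×ℝ^{N_b}. -/
abbrev FlowEffort (Np Nq Nb : ℕ) :=
  ((Fin Np → ℝ) × (Fin Nq → ℝ) × (Fin Nb → ℝ)) ×
    ((Fin Np → ℝ) × (Fin Nq → ℝ) × (Fin Nb → ℝ))

/-- The symmetric bilinear pairing of Theorem 2 (simplicial Stokes–Dirac pairing),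
with the wedge-product reordering signs (−1)^{q(p−1)} and (−1)^{(p−1)(q−1)}. -/
def pairingD (p q : ℕ) {Np Nq Nb : ℕ} (z w : FlowEffort Np Nq Nb) : ℝ :=
  (z.2.1 ⬝ᵥ w.1.1 + w.2.1 ⬝ᵥ z.1.1)
    + (-1 : ℝ) ^ (q * (p - 1)) * (z.2.2.1 ⬝ᵥ w.1.2.1 + w.2.2.1 ⬝ᵥ z.1.2.1)
    + (-1 : ℝ) ^ ((p - 1) * (q - 1)) * (z.2.2.2 ⬝ᵥ w.1.2.2 + w.2.2.2 ⬝ᵥ z.1.2.2)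

/-- The simplicial Dirac structure D_d in matrix form: with r = pq+1,
d_i = (−1)^q Aᵀ and d_b = (−1)^{q−1} Bᵀ,
f_p = (−1)^r d_i e_q + (−1)^r d_b e_b, f_q = A e_p, f_b = (−1)^p B e_p. -/
def simplicialDirac (p q : ℕ) {Np Nq Nb : ℕ}
    (A : Matrix (Fin Nq) (Fin Np) ℝ) (B : Matrix (Fin Nb) (Fin Np) ℝ) :
    Set (FlowEffort Np Nq Nb) :=
  {z | z.1.1 = (-1 : ℝ) ^ (p * q + 1) • (((-1 : ℝ) ^ q • Aᵀ).mulVec z.2.2.1)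
          + (-1 : ℝ) ^ (p * q + 1) • (((-1 : ℝ) ^ (q - 1) • Bᵀ).mulVec z.2.2.2)
      ∧ z.1.2.1 = A.mulVec z.2.1
      ∧ z.1.2.2 = (-1 : ℝ) ^ p • B.mulVec z.2.1}

/-!
`D_d` is the graph `f = J e` of a map `J` from efforts to flows, and the pairing is
`β(e, f') + β(e', f)` for a right-separating bilinear form `β` between efforts and flows.
The graph of any `J` that is skew for `β` equals its own orthogonal complement: orthogonality
of `(f, e)` to every `(J e', e')` says `β(e', f - J e) = 0` for all `e'`. For the block map `J`
skewness reduces, via `e ⬝ᵥ Aᵀ e' = e' ⬝ᵥ A e`, to two sign identities, which hold because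
the exponents involved differ by odd numbers once `p, q ≥ 1`.
-/

section GraphOrthogonal

variable {R E V : Type*} [CommRing R] [AddCommGroup E] [Module R E] [AddCommGroup V] [Module R V]

theorem LinearMap.SeparatingRight.graph_eq_orthogonal {β : E →ₗ[R] V →ₗ[R] R}
    (hβ : β.SeparatingRight) {J : E → V} (hJ : ∀ e e', β e (J e') + β e' (J e) = 0) :
    {z : V × E | z.1 = J z.2} =
      {z | ∀ w ∈ {w : V × E | w.1 = J w.2}, β z.2 w.1 + β w.2 z.1 = 0} := by
  ext ⟨f, e⟩
  simp only [Set.mem_ofPred_eq, Prod.forall]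
  constructor
  · rintro rfl _ e' rfl
    exact hJ e e'
  · intro h
    have hker : ∀ e', β e' (f - J e) = 0 := fun e' => by
      rw [map_sub, sub_eq_zero]
      linear_combination h (J e') e' rfl - hJ e e'
    exact sub_eq_zero.1 (hβ _ hker)

end GraphOrthogonal

section BlockPairing

variable {R : Type*} [CommRing R] {m n o : Type*} [Fintype m] [Fintype n] [Fintype o]

def signedDotPairing (s₁ s₂ : R) :
    (m → R) × (n → R) × (o → R) →ₗ[R] (m → R) × (n → R) × (o → R) →ₗ[R] R :=
  LinearMap.mk₂ R (fun e f => e.1 ⬝ᵥ f.1 + s₁ * (e.2.1 ⬝ᵥ f.2.1) + s₂ * (e.2.2 ⬝ᵥ f.2.2))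
    (fun _ _ _ => by simp only [Prod.fst_add, Prod.snd_add, add_dotProduct]; ring)
    (fun _ _ _ => by simp only [Prod.smul_fst, Prod.smul_snd, smul_dotProduct, smul_eq_mul]; ring)
    (fun _ _ _ => by simp only [Prod.fst_add, Prod.snd_add, dotProduct_add]; ring)
    (fun _ _ _ => by simp only [Prod.smul_fst, Prod.smul_snd, dotProduct_smul, smul_eq_mul]; ring)

@[simp]
theorem signedDotPairing_apply (s₁ s₂ : R) (e f : (m → R) × (n → R) × (o → R)) :
    signedDotPairing s₁ s₂ e f = e.1 ⬝ᵥ f.1 + s₁ * (e.2.1 ⬝ᵥ f.2.1) + s₂ * (e.2.2 ⬝ᵥ f.2.2) :=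
  rfl

theorem signedDotPairing_separatingRight {s₁ s₂ : R} (h₁ : IsUnit s₁) (h₂ : IsUnit s₂) :
    (signedDotPairing s₁ s₂ : (m → R) × (n → R) × (o → R) →ₗ[R] _).SeparatingRight := by
  rintro ⟨f₀, f₁, f₂⟩ h
  have hf₀ : f₀ = 0 := dotProduct_eq_zero _ fun x => by
    simpa [dotProduct_comm] using h (x, 0, 0)
  have hf₁ : f₁ = 0 := dotProduct_eq_zero _ fun x => by
    simpa [dotProduct_comm, h₁.mul_right_eq_zero] using h (0, x, 0)
  have hf₂ : f₂ = 0 := dotProduct_eq_zero _ fun x => by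
    simpa [dotProduct_comm, h₂.mul_right_eq_zero] using h (0, 0, x)
  simp [hf₀, hf₁, hf₂]

def stokesDiracMap (a b c : R) (A : Matrix n m R) (B : Matrix o m R)
    (e : (m → R) × (n → R) × (o → R)) : (m → R) × (n → R) × (o → R) :=
  (a • (Aᵀ *ᵥ e.2.1) + b • (Bᵀ *ᵥ e.2.2), A *ᵥ e.1, c • (B *ᵥ e.1))

theorem signedDotPairing_stokesDiracMap_add_swap {a b c s₁ s₂ : R} (A : Matrix n m R)
    (B : Matrix o m R) (ha : a + s₁ = 0) (hb : b + s₂ * c = 0)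
    (e e' : (m → R) × (n → R) × (o → R)) :
    signedDotPairing s₁ s₂ e (stokesDiracMap a b c A B e') +
      signedDotPairing s₁ s₂ e' (stokesDiracMap a b c A B e) = 0 := by
  simp only [signedDotPairing_apply, stokesDiracMap, dotProduct_add, dotProduct_smul,
    smul_eq_mul, dotProduct_transpose_mulVec]
  linear_combination (e'.2.1 ⬝ᵥ A *ᵥ e.1 + e.2.1 ⬝ᵥ A *ᵥ e'.1) * ha
    + (e'.2.2 ⬝ᵥ B *ᵥ e.1 + e.2.2 ⬝ᵥ B *ᵥ e'.1) * hb

end BlockPairing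

section Signs

variable {R : Type*} [Ring R] {p q : ℕ}

theorem neg_one_pow_interior_sign (hp : 0 < p) :
    (-1 : R) ^ (p * q + 1) * (-1) ^ q + (-1) ^ (q * (p - 1)) = 0 := by
  obtain ⟨p, rfl⟩ : ∃ p', p = p' + 1 := ⟨p - 1, by omega⟩
  rw [← pow_add, Nat.add_sub_cancel, show (p + 1) * q + 1 + q = q * p + 2 * q + 1 by ring,
    pow_succ, pow_add, pow_mul]
  simp

theorem neg_one_pow_boundary_sign (hp : 0 < p) (hq : 0 < q) :
    (-1 : R) ^ (p * q + 1) * (-1) ^ (q - 1) + (-1) ^ ((p - 1) * (q - 1)) * (-1) ^ p = 0 := by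
  obtain ⟨p, rfl⟩ : ∃ p', p = p' + 1 := ⟨p - 1, by omega⟩
  obtain ⟨q, rfl⟩ : ∃ q', q = q' + 1 := ⟨q - 1, by omega⟩
  rw [← pow_add, ← pow_add, Nat.add_sub_cancel, Nat.add_sub_cancel,
    show (p + 1) * (q + 1) + 1 + q = p * q + (p + 1) + 2 * q + 1 by ring,
    pow_succ, pow_add _ _ (2 * q), pow_mul]
  simp

end Signs

theorem simplicialDirac_eq_graph (p q : ℕ) {Np Nq Nb : ℕ}
    (A : Matrix (Fin Nq) (Fin Np) ℝ) (B : Matrix (Fin Nb) (Fin Np) ℝ) :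
    simplicialDirac p q A B =
      {z | z.1 = stokesDiracMap ((-1) ^ (p * q + 1) * (-1) ^ q)
        ((-1) ^ (p * q + 1) * (-1) ^ (q - 1)) ((-1) ^ p) A B z.2} := by
  ext z
  simp only [simplicialDirac, stokesDiracMap, Set.mem_ofPred_eq, Prod.ext_iff, smul_mulVec,
    smul_smul]

theorem pairingD_eq_signedDotPairing (p q : ℕ) {Np Nq Nb : ℕ} (z w : FlowEffort Np Nq Nb) :
    pairingD p q z w =
      signedDotPairing ((-1) ^ (q * (p - 1))) ((-1) ^ ((p - 1) * (q - 1))) z.2 w.1 +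
        signedDotPairing ((-1) ^ (q * (p - 1))) ((-1) ^ ((p - 1) * (q - 1))) w.2 z.1 := by
  simp only [pairingD, signedDotPairing_apply]
  ring

theorem simplicialDirac_is_dirac_general (p q Np Nq Nb : ℕ)
    (hp : 0 < p) (hq : 0 < q)
    (A : Matrix (Fin Nq) (Fin Np) ℝ) (B : Matrix (Fin Nb) (Fin Np) ℝ) :
    simplicialDirac p q A B =
      {z | ∀ w ∈ simplicialDirac p q A B, pairingD p q z w = 0} := by
  have hsep := signedDotPairing_separatingRight (m := Fin Np) (n := Fin Nq) (o := Fin Nb)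
    ((isUnit_neg_one (α := ℝ)).pow (q * (p - 1))) (isUnit_neg_one.pow ((p - 1) * (q - 1)))
  have hskew := signedDotPairing_stokesDiracMap_add_swap A B
    (neg_one_pow_interior_sign (q := q) hp) (neg_one_pow_boundary_sign hp hq)
  simp_rw [simplicialDirac_eq_graph, pairingD_eq_signedDotPairing]
  exact hsep.graph_eq_orthogonal hskew

/-- Theorem 2, matrix form: the simplicial Dirac structure D_d equals its
orthogonal complement with respect to the pairing, i.e. it is a Dirac structure. -/
theorem simplicialDirac_is_dirac (p q n Np Nq Nb : ℕ)
    (hp : 0 < p) (hq : 0 < q) (hn : 0 < n) (hpq : p + q = n + 1)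
    (A : Matrix (Fin Nq) (Fin Np) ℝ) (B : Matrix (Fin Nb) (Fin Np) ℝ) :
    simplicialDirac p q A B =
      {z | ∀ w ∈ simplicialDirac p q A B, pairingD p q z w = 0} :=
  simplicialDirac_is_dirac_general p q Np Nq Nb hp hq A B
end

section
/- (Proposition on conservation laws.) Let p, q be positive integers, set ε = (−1)^{q(p+1)}, let A ∈ ℝ^{N_q×N_p} and B ∈ ℝ^{N_b×N_p} be real matrices, and let C : ℝ^{N_p} × ℝ^{N_q} → ℝ be continuously differentiable with partial gradients ∇₁C ∈ ℝ^{N_p}, ∇₂C ∈ ℝ^{N_q}. Call (x,z,u) a trajectory with Hamiltonian H if H : ℝ^{N_p}×ℝ^{N_q} → ℝ is continuously differentiable, u : I → ℝ^{N_b} is continuous on an interval I, and (x,z) : I → ℝ^{N_p}×ℝ^{N_q} is differentiable with x'(t) = ε Aᵀ ∇₂H(x(t),z(t)) − ε Bᵀ u(t) and z'(t) = −A ∇₁H(x(t),z(t)). Then the following are equivalent: (i) for every (a,b) ∈ ℝ^{N_p}×ℝ^{N_q}, A ∇₁C(a,b) = 0 and Aᵀ ∇₂C(a,b) = 0; (ii)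 for every continuously differentiable Hamiltonian H and every trajectory (x,z,u), d/dt C(x(t),z(t)) = ⟨f_b^C(t), u(t)⟩ for all t, where f_b^C(t) = −ε B ∇₁C(x(t),z(t)). -/
/-!
Along a trajectory the chain rule gives `d/dt C = ∇₁C ⬝ x' + ∇₂C ⬝ z'`, and moving the matrices
across the dot products rewrites this as
`ε (A ∇₁C) ⬝ ∇₂H - (Aᵀ ∇₂C) ⬝ ∇₁H + (-ε B ∇₁C) ⬝ u`.
The kernel conditions kill the first two terms. Conversely, testing the balance law with a linear
Hamiltonian of arbitrary constant gradient `(h₁, h₂)`, zero input and the straight-line trajectory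
through an arbitrary point `(a, b)` gives `ε (A ∇₁C) ⬝ h₂ = (Aᵀ ∇₂C) ⬝ h₁` for all `h₁, h₂`,
so both vectors vanish because `ε = ±1 ≠ 0`.
-/

open Matrix

section

variable {k l m n : Type*} [Fintype k] [Fintype l] [Fintype m] [Fintype n]

theorem hasDerivAt_comp_prodMk_of_fderiv_eq_dotProduct
    {C : (m → ℝ) × (n → ℝ) → ℝ} {g₁ : (m → ℝ) × (n → ℝ) → m → ℝ}
    {g₂ : (m → ℝ) × (n → ℝ) → n → ℝ} (hC : Differentiable ℝ C)
    (hg : ∀ y v, fderiv ℝ C y v = g₁ y ⬝ᵥ v.1 + g₂ y ⬝ᵥ v.2)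
    {x : ℝ → m → ℝ} {z : ℝ → n → ℝ} {x' : m → ℝ} {z' : n → ℝ} {t : ℝ}
    (hx : HasDerivAt x x' t) (hz : HasDerivAt z z' t) :
    HasDerivAt (fun s => C (x s, z s)) (g₁ (x t, z t) ⬝ᵥ x' + g₂ (x t, z t) ⬝ᵥ z') t := by
  have h := (hC (x t, z t)).hasFDerivAt.comp_hasDerivAt t (hx.prodMk hz)
  rwa [hg] at h

noncomputable def dotProductPairCLM (c₁ : m → ℝ) (c₂ : n → ℝ) :
    ((m → ℝ) × (n → ℝ)) →L[ℝ] ℝ :=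
  LinearMap.toContinuousLinearMap
    ((dotProductBilin ℝ ℝ c₁).coprod (dotProductBilin ℝ ℝ c₂))

theorem fderiv_dotProductPairCLM_apply (c₁ : m → ℝ) (c₂ : n → ℝ) (y v : (m → ℝ) × (n → ℝ)) :
    fderiv ℝ (dotProductPairCLM c₁ c₂) y v = c₁ ⬝ᵥ v.1 + c₂ ⬝ᵥ v.2 := by
  rw [ContinuousLinearMap.fderiv]
  rfl

theorem dotProduct_portHamiltonian_field {R : Type*} [CommRing R] (A : Matrix k m R)
    (B : Matrix l m R) (ε : R) (g₁ h₁ : m → R) (g₂ h₂ : k → R) (w : l → R) :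
    g₁ ⬝ᵥ (ε • Aᵀ *ᵥ h₂ - ε • Bᵀ *ᵥ w) + g₂ ⬝ᵥ -(A *ᵥ h₁)
      = ε * ((A *ᵥ g₁) ⬝ᵥ h₂) - (Aᵀ *ᵥ g₂) ⬝ᵥ h₁ + -(ε • B *ᵥ g₁) ⬝ᵥ w := by
  have hA₁ : g₁ ⬝ᵥ Aᵀ *ᵥ h₂ = (A *ᵥ g₁) ⬝ᵥ h₂ := by rw [dotProduct_mulVec, vecMul_transpose]
  have hB : g₁ ⬝ᵥ Bᵀ *ᵥ w = (B *ᵥ g₁) ⬝ᵥ w := by rw [dotProduct_mulVec, vecMul_transpose]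
  have hA₂ : g₂ ⬝ᵥ A *ᵥ h₁ = (Aᵀ *ᵥ g₂) ⬝ᵥ h₁ := by rw [dotProduct_mulVec, mulVec_transpose]
  simp only [dotProduct_sub, dotProduct_smul, dotProduct_neg, neg_dotProduct, smul_dotProduct,
    hA₁, hB, hA₂, smul_eq_mul]
  ring

theorem mulVec_eq_zero_and_transpose_mulVec_eq_zero {R : Type*} [CommRing R] [NoZeroDivisors R]
    {A : Matrix k m R} {ε : R} (hε : ε ≠ 0) {g₁ : m → R} {g₂ : k → R}
    (h : ∀ h₁ h₂, ε * ((A *ᵥ g₁) ⬝ᵥ h₂) - (Aᵀ *ᵥ g₂) ⬝ᵥ h₁ = 0) :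
    A *ᵥ g₁ = 0 ∧ Aᵀ *ᵥ g₂ = 0 :=
  ⟨dotProduct_eq_zero _ fun h₂ => by simpa [hε] using h 0 h₂,
    dotProduct_eq_zero _ fun h₁ => by simpa using h h₁ 0⟩

end

theorem conservation_law_characterization_general (p q Np Nq Nb : ℕ)
    (A : Matrix (Fin Nq) (Fin Np) ℝ) (B : Matrix (Fin Nb) (Fin Np) ℝ)
    (C : (Fin Np → ℝ) × (Fin Nq → ℝ) → ℝ)
    (gC1 : (Fin Np → ℝ) × (Fin Nq → ℝ) → Fin Np → ℝ)
    (gC2 : (Fin Np → ℝ) × (Fin Nq → ℝ) → Fin Nq → ℝ)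
    (hC : ContDiff ℝ 1 C)
    (hgC : ∀ y v, fderiv ℝ C y v = gC1 y ⬝ᵥ v.1 + gC2 y ⬝ᵥ v.2) :
    (∀ a : Fin Np → ℝ, ∀ b : Fin Nq → ℝ,
        A.mulVec (gC1 (a, b)) = 0 ∧ Aᵀ.mulVec (gC2 (a, b)) = 0)
      ↔
    (∀ (H : (Fin Np → ℝ) × (Fin Nq → ℝ) → ℝ)
        (gH1 : (Fin Np → ℝ) × (Fin Nq → ℝ) → Fin Np → ℝ)
        (gH2 : (Fin Np → ℝ) × (Fin Nq → ℝ) → Fin Nq → ℝ),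
        ContDiff ℝ 1 H →
        (∀ y v, fderiv ℝ H y v = gH1 y ⬝ᵥ v.1 + gH2 y ⬝ᵥ v.2) →
        ∀ (I : Set ℝ), I.OrdConnected →
        ∀ (u : ℝ → Fin Nb → ℝ) (x : ℝ → Fin Np → ℝ) (z : ℝ → Fin Nq → ℝ),
          ContinuousOn u I →
          (∀ t ∈ I, HasDerivAt x
            ((-1 : ℝ) ^ (q * (p + 1)) • Aᵀ.mulVec (gH2 (x t, z t))
              - (-1 : ℝ) ^ (q * (p + 1)) • Bᵀ.mulVec (u t)) t) →
          (∀ t ∈ I, HasDerivAt z (-(A.mulVec (gH1 (x t, z t)))) t) →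
          ∀ t ∈ I, HasDerivAt (fun s => C (x s, z s))
            ((-((-1 : ℝ) ^ (q * (p + 1)) • B.mulVec (gC1 (x t, z t)))) ⬝ᵥ u t) t) := by
  set ε : ℝ := (-1 : ℝ) ^ (q * (p + 1))
  have hε : ε ≠ 0 := pow_ne_zero _ (by norm_num)
  have hCd : Differentiable ℝ C := hC.differentiable one_ne_zero
  constructor
  · rintro hker H gH1 gH2 - - I - u x z - hx hz t ht
    obtain ⟨hA₁, hA₂⟩ := hker (x t) (z t)
    have hC' := hasDerivAt_comp_prodMk_of_fderiv_eq_dotProduct hCd hgC (hx t ht) (hz t ht)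
    rwa [dotProduct_portHamiltonian_field, hA₁, hA₂, zero_dotProduct, zero_dotProduct, mul_zero,
      sub_zero, zero_add] at hC'
  · intro hbal a b
    refine mulVec_eq_zero_and_transpose_mulVec_eq_zero hε ?_
    intro h₁ h₂
    set v₁ : Fin Np → ℝ := ε • Aᵀ *ᵥ h₂ - ε • Bᵀ *ᵥ 0
    set v₂ : Fin Nq → ℝ := -(A *ᵥ h₁)
    have hline {N : ℕ} (c v : Fin N → ℝ) (t : ℝ) : HasDerivAt (fun s : ℝ => c + s • v) v t := by
      simpa using ((hasDerivAt_id t).smul_const v).const_add c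
    have hbal₀ := hbal (dotProductPairCLM h₁ h₂) (fun _ => h₁) (fun _ => h₂)
      (ContinuousLinearMap.contDiff _) (fderiv_dotProductPairCLM_apply h₁ h₂) Set.univ
      Set.ordConnected_univ 0 (fun s => a + s • v₁) (fun s => b + s • v₂) continuousOn_const
      (fun t _ => hline a v₁ t) (fun t _ => hline b v₂ t) 0 trivial
    have hchain := hasDerivAt_comp_prodMk_of_fderiv_eq_dotProduct hCd hgC (hline a v₁ 0)
      (hline b v₂ 0)
    have hderiv := hchain.unique hbal₀
    rw [dotProduct_portHamiltonian_field] at hderiv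
    simpa only [zero_smul, add_zero, Pi.zero_apply, dotProduct_zero] using hderiv

/-- proposition on conservation laws, matrix form: with ε = (−1)^{q(p+1)},
the kernel conditions A∇₁C = 0 and Aᵀ∇₂C = 0 (pointwise) hold iff along every trajectory
of the discretized port-Hamiltonian system, for every Hamiltonian H,
d/dt C(x,z) = ⟨f_b^C, u⟩ with f_b^C = −ε B ∇₁C. -/
theorem conservation_law_characterization (p q Np Nq Nb : ℕ) (hp : 0 < p) (hq : 0 < q)
    (A : Matrix (Fin Nq) (Fin Np) ℝ) (B : Matrix (Fin Nb) (Fin Np) ℝ)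
    (C : (Fin Np → ℝ) × (Fin Nq → ℝ) → ℝ)
    (gC1 : (Fin Np → ℝ) × (Fin Nq → ℝ) → Fin Np → ℝ)
    (gC2 : (Fin Np → ℝ) × (Fin Nq → ℝ) → Fin Nq → ℝ)
    (hC : ContDiff ℝ 1 C)
    (hgC : ∀ y v, fderiv ℝ C y v = gC1 y ⬝ᵥ v.1 + gC2 y ⬝ᵥ v.2) :
    (∀ a : Fin Np → ℝ, ∀ b : Fin Nq → ℝ,
        A.mulVec (gC1 (a, b)) = 0 ∧ Aᵀ.mulVec (gC2 (a, b)) = 0)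
      ↔
    (∀ (H : (Fin Np → ℝ) × (Fin Nq → ℝ) → ℝ)
        (gH1 : (Fin Np → ℝ) × (Fin Nq → ℝ) → Fin Np → ℝ)
        (gH2 : (Fin Np → ℝ) × (Fin Nq → ℝ) → Fin Nq → ℝ),
        ContDiff ℝ 1 H →
        (∀ y v, fderiv ℝ H y v = gH1 y ⬝ᵥ v.1 + gH2 y ⬝ᵥ v.2) →
        ∀ (I : Set ℝ), I.OrdConnected →
        ∀ (u : ℝ → Fin Nb → ℝ) (x : ℝ → Fin Np → ℝ) (z : ℝ → Fin Nq → ℝ),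
          ContinuousOn u I →
          (∀ t ∈ I, HasDerivAt x
            ((-1 : ℝ) ^ (q * (p + 1)) • Aᵀ.mulVec (gH2 (x t, z t))
              - (-1 : ℝ) ^ (q * (p + 1)) • Bᵀ.mulVec (u t)) t) →
          (∀ t ∈ I, HasDerivAt z (-(A.mulVec (gH1 (x t, z t)))) t) →
          ∀ t ∈ I, HasDerivAt (fun s => C (x s, z s))
            ((-((-1 : ℝ) ^ (q * (p + 1)) • B.mulVec (gC1 (x t, z t)))) ⬝ᵥ u t) t) :=
  conservation_law_characterization_general p q Np Nq Nb A B C gC1 gC2 hC hgC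
end

section
/- (Total charge balance of the discretized transmission line with current inputs.) Let m ≥ 1, let D ∈ ℝ^{m×(m+1)} be the difference matrix with D_{i,i} = −1, D_{i,i+1} = 1 and all other entries zero, and let T ∈ ℝ^{2×(m+1)} be the matrix with T_{1,1} = −1, T_{2,m+1} = 1 and all other entries zero. Let I_cur : I → ℝ^m and e : I → ℝ² be continuous, and let q : I → ℝ^{m+1} be differentiable with q'(t) = Dᵀ I_cur(t) − Tᵀ e(t). Then the total charge C_q(t) = Σ_{i=1}^{m+1} q_i(t) satisfies d/dt C_q(t) = e₁(t) − e₂(t) for all t ∈ I. -/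
/-!
Summing the components of `q' = Dᵀ I_cur − Tᵀ e` pairs each input with a row sum of the
matrix acting on it: `∑ᵢ (Aᵀ v)ᵢ = (A 𝟙) ⬝ v`. Every row of the difference matrix `D` sums
to zero, so the internal currents cancel, while the rows of `T` sum to `−1` and `1`,
leaving `e₁ − e₂`.
-/

open Matrix

/-- The difference matrix D ∈ ℝ^{m×(m+1)}: D_{i,i} = −1, D_{i,i+1} = 1, else 0. -/
def diffMat (m : ℕ) : Matrix (Fin m) (Fin (m + 1)) ℝ :=
  Matrix.of fun i j => if j = i.castSucc then -1 else if j = i.succ then 1 else 0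

/-- The boundary trace matrix T ∈ ℝ^{2×(m+1)}: T_{1,1} = −1, T_{2,m+1} = 1, else 0. -/
def trMat (m : ℕ) : Matrix (Fin 2) (Fin (m + 1)) ℝ :=
  Matrix.of fun i j =>
    if i = 0 ∧ j = 0 then -1 else if i = 1 ∧ j = Fin.last m then 1 else 0

theorem Matrix.sum_transpose_mulVec {m n R : Type*} [Fintype m] [Fintype n] [CommSemiring R]
    (A : Matrix m n R) (v : m → R) : ∑ i, (Aᵀ *ᵥ v) i = (A *ᵥ 1) ⬝ᵥ v := by
  rw [← one_dotProduct, dotProduct_mulVec, vecMul_transpose]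

theorem HasDerivAt.sum_apply {ι : Type*} [Fintype ι] {q : ℝ → ι → ℝ} {q' : ι → ℝ} {t : ℝ}
    (h : HasDerivAt q q' t) : HasDerivAt (fun s => ∑ i, q s i) (∑ i, q' i) t :=
  HasDerivAt.fun_sum fun i _ => hasDerivAt_pi.mp h i

theorem diffMat_mulVec_one (m : ℕ) : diffMat m *ᵥ 1 = 0 := by
  ext i
  have hrow : ∀ j, diffMat m i j =
      (if j = i.succ then 1 else 0) - (if j = i.castSucc then 1 else 0) := by
    intro j
    by_cases hj : j = i.castSucc
    · simp [diffMat, hj, (Fin.castSucc_lt_succ (i := i)).ne]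
    · simp [diffMat, hj]
  simp [mulVec, dotProduct, hrow, Finset.sum_sub_distrib]

theorem trMat_mulVec_one (m : ℕ) : trMat m *ᵥ 1 = ![-1, 1] := by
  ext i
  fin_cases i <;> simp [mulVec, dotProduct, trMat]

theorem total_charge_balance_general (m : ℕ)
    (I : Set ℝ)
    (Icur : ℝ → Fin m → ℝ)
    (e : ℝ → Fin 2 → ℝ)
    (q : ℝ → Fin (m + 1) → ℝ)
    (hq : ∀ t ∈ I, HasDerivAt q
      ((diffMat m)ᵀ.mulVec (Icur t) - (trMat m)ᵀ.mulVec (e t)) t) :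
    ∀ t ∈ I, HasDerivAt (fun s => ∑ i, q s i) (e t 0 - e t 1) t := by
  intro t ht
  convert (hq t ht).sum_apply using 1
  simp only [Pi.sub_apply, Finset.sum_sub_distrib]
  rw [sum_transpose_mulVec, sum_transpose_mulVec, diffMat_mulVec_one,
    trMat_mulVec_one, zero_dotProduct]
  simp only [dotProduct, Fin.sum_univ_two, cons_val_zero, cons_val_one]
  ring

/-- total charge balance of the discretized transmission line with
current inputs: if q' = Dᵀ I_cur − Tᵀ e, then the total charge C_q = Σᵢ qᵢ
satisfies d/dt C_q = e₁ − e₂. -/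
theorem total_charge_balance (m : ℕ) (hm : 1 ≤ m)
    (I : Set ℝ) (hI : I.OrdConnected)
    (Icur : ℝ → Fin m → ℝ) (hIcur : ContinuousOn Icur I)
    (e : ℝ → Fin 2 → ℝ) (he : ContinuousOn e I)
    (q : ℝ → Fin (m + 1) → ℝ)
    (hq : ∀ t ∈ I, HasDerivAt q
      ((diffMat m)ᵀ.mulVec (Icur t) - (trMat m)ᵀ.mulVec (e t)) t) :
    ∀ t ∈ I, HasDerivAt (fun s => ∑ i, q s i) (e t 0 - e t 1) t :=
  total_charge_balance_general m I Icur e q hq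
end

section
/- (Proposition: Casimirs of the closed-loop system.) Let p, q be positive integers, ε = (−1)^{q(p+1)}, let A ∈ ℝ^{N_q×N_p}, B ∈ ℝ^{N_b×N_p}, and g ∈ ℝ^{m×N_b} be real matrices. Consider, for a continuously differentiable closed-loop Hamiltonian H : ℝ^{N_p}×ℝ^{N_q}×ℝ^m → ℝ, the closed-loop system x'(t) = ε Aᵀ ∇₂H + ε Bᵀ gᵀ ∇₃H, z'(t) = −A ∇₁H, ζ'(t) = (−1)^p g B ∇₁H (all gradients evaluated at (x(t),z(t),ζ(t))). Let C : ℝ^{N_p}×ℝ^{N_q}×ℝ^m → ℝ be continuously differentiable. Then the following are equivalent: (i) at every point, A ∇₁C = 0, g B ∇₁C = 0, and Aᵀ ∇₂C = (−1)^p Bᵀ gᵀ ∇₃C; (ii) for every continuously differentiable H and every differentiable solution (x,z,ζ) of the closed-loop system, t ↦ C(x(t),z(t),ζ(t)) is constant (C is a Casimir function of the closed-loop system). -/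
/-!
Along a solution of the closed-loop system, the chain rule gives
`d/dt C = ⟨∇C, J ∇H⟩` for the closed-loop structure matrix `J`, and transposing `J` rewrites this
as `ε ⟨A ∇₁C, ∇₂H⟩ + ε ⟨g B ∇₁C, ∇₃H⟩ - ⟨Aᵀ ∇₂C - (-1)^p Bᵀ gᵀ ∇₃C, ∇₁H⟩`. The kernel conditions
make it vanish, hence `C` is constant by the mean value theorem. Conversely, a linear Hamiltonian
with constant gradient `(a, b, c)` has straight lines as closed-loop trajectories, so every
Casimir has vanishing derivative in every direction `J (a, b, c)`; since `ε ≠ 0`, this forces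
the three kernel conditions.
-/

open Matrix

section

variable {R ι κ μ ν : Type*} [CommRing R] [Fintype ι] [Fintype κ] [Fintype μ] [Fintype ν]

/-- The pairing by which `fderiv ℝ C y` is written through the partial gradients of `C`. -/
def tripleDot (u : (ι → R) × (κ → R) × (μ → R)) : ((ι → R) × (κ → R) × (μ → R)) →ₗ[R] R where
  toFun V := u.1 ⬝ᵥ V.1 + u.2.1 ⬝ᵥ V.2.1 + u.2.2 ⬝ᵥ V.2.2
  map_add' V W := by simp only [Prod.fst_add, Prod.snd_add, dotProduct_add]; ring
  map_smul' r V := by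
    simp only [Prod.smul_fst, Prod.smul_snd, dotProduct_smul, smul_eq_mul, RingHom.id_apply]
    ring

/-- The closed-loop vector field at a point where `H` has partial gradients `(a, b, c)`;
the system of the theorem has `ε = (-1) ^ (q * (p + 1))` and `σ = (-1) ^ p`. -/
def closedLoopField (ε σ : R) (A : Matrix κ ι R) (B : Matrix ν ι R) (g : Matrix μ ν R)
    (a : ι → R) (b : κ → R) (c : μ → R) : (ι → R) × (κ → R) × (μ → R) :=
  (ε • Aᵀ *ᵥ b + ε • Bᵀ *ᵥ (gᵀ *ᵥ c), -(A *ᵥ a), σ • g *ᵥ (B *ᵥ a))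

theorem dotProduct_mulVec_eq_transpose_mulVec (u : κ → R) (M : Matrix κ ι R) (x : ι → R) :
    u ⬝ᵥ M *ᵥ x = Mᵀ *ᵥ u ⬝ᵥ x := by
  rw [dotProduct_mulVec, mulVec_transpose]

theorem tripleDot_closedLoopField (ε σ : R) (A : Matrix κ ι R) (B : Matrix ν ι R)
    (g : Matrix μ ν R) (u a : ι → R) (v b : κ → R) (w c : μ → R) :
    tripleDot (u, v, w) (closedLoopField ε σ A B g a b c) =
      ε * (A *ᵥ u ⬝ᵥ b) + ε * (g *ᵥ (B *ᵥ u) ⬝ᵥ c) - (Aᵀ *ᵥ v - σ • Bᵀ *ᵥ (gᵀ *ᵥ w)) ⬝ᵥ a := by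
  simp only [tripleDot, closedLoopField, LinearMap.coe_mk, AddHom.coe_mk, dotProduct_add,
    dotProduct_smul, dotProduct_neg, sub_dotProduct, smul_dotProduct, smul_eq_mul,
    dotProduct_mulVec_eq_transpose_mulVec, transpose_transpose]
  ring

theorem tripleDot_closedLoopField_eq_zero_iff [NoZeroDivisors R] {ε : R} (hε : ε ≠ 0) (σ : R)
    (A : Matrix κ ι R) (B : Matrix ν ι R) (g : Matrix μ ν R) (u : ι → R) (v : κ → R)
    (w : μ → R) :
    (∀ a b c, tripleDot (u, v, w) (closedLoopField ε σ A B g a b c) = 0) ↔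
      A *ᵥ u = 0 ∧ g *ᵥ (B *ᵥ u) = 0 ∧ Aᵀ *ᵥ v = σ • Bᵀ *ᵥ (gᵀ *ᵥ w) := by
  simp only [tripleDot_closedLoopField]
  constructor
  · intro h
    refine ⟨dotProduct_eq_zero _ fun b => ?_, dotProduct_eq_zero _ fun c => ?_,
      sub_eq_zero.1 <| dotProduct_eq_zero _ fun a => ?_⟩
    · simpa [hε] using h 0 b 0
    · simpa [hε] using h 0 0 c
    · simpa [sub_dotProduct, sub_eq_zero, eq_comm] using h a 0 0
  · rintro ⟨h₁, h₂, h₃⟩ a b c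
    simp [h₁, h₂, h₃]

end

section

variable {E F : Type*} [NormedAddCommGroup E] [NormedSpace ℝ E] [NormedAddCommGroup F]
  [NormedSpace ℝ F]

theorem Set.OrdConnected.apply_eq_apply_of_fderiv_apply_eq_zero {I : Set ℝ} (hI : I.OrdConnected)
    {C : E → F} {γ γ' : ℝ → E} (hC : ∀ t ∈ I, DifferentiableAt ℝ C (γ t))
    (hγ : ∀ t ∈ I, HasDerivAt γ (γ' t) t) (h : ∀ t ∈ I, fderiv ℝ C (γ t) (γ' t) = 0)
    {s t : ℝ} (hs : s ∈ I) (ht : t ∈ I) :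
    C (γ s) = C (γ t) := by
  have hderiv : ∀ r ∈ I, HasDerivWithinAt (C ∘ γ) 0 I r := fun r hr => by
    simpa [h r hr] using ((hC r hr).hasFDerivAt.comp_hasDerivAt r (hγ r hr)).hasDerivWithinAt
  have hbound := hI.convex.norm_image_sub_le_of_norm_hasDerivWithin_le hderiv
    (fun _ _ => norm_zero.le) ht hs
  simpa [sub_eq_zero] using hbound

theorem hasDerivAt_add_smul (y v : E) (t : ℝ) : HasDerivAt (fun r : ℝ => y + r • v) v t := by
  simpa using ((hasDerivAt_id t).smul_const v).const_add y

theorem fderiv_apply_eq_zero_of_forall_apply_add_smul_eq {C : E → F} {y : E}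
    (hC : DifferentiableAt ℝ C y) (v : E) (h : ∀ t : ℝ, C (y + t • v) = C y) :
    fderiv ℝ C y v = 0 := by
  rw [← hC.lineDeriv_eq_fderiv, lineDeriv, funext h, deriv_const]

end

theorem closed_loop_casimir_characterization_general (p q Np Nq Nb m : ℕ)
    (A : Matrix (Fin Nq) (Fin Np) ℝ) (B : Matrix (Fin Nb) (Fin Np) ℝ)
    (g : Matrix (Fin m) (Fin Nb) ℝ)
    (C : (Fin Np → ℝ) × (Fin Nq → ℝ) × (Fin m → ℝ) → ℝ)
    (gC1 : (Fin Np → ℝ) × (Fin Nq → ℝ) × (Fin m → ℝ) → Fin Np → ℝ)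
    (gC2 : (Fin Np → ℝ) × (Fin Nq → ℝ) × (Fin m → ℝ) → Fin Nq → ℝ)
    (gC3 : (Fin Np → ℝ) × (Fin Nq → ℝ) × (Fin m → ℝ) → Fin m → ℝ)
    (hC : ContDiff ℝ 1 C)
    (hgC : ∀ y v, fderiv ℝ C y v = gC1 y ⬝ᵥ v.1 + gC2 y ⬝ᵥ v.2.1 + gC3 y ⬝ᵥ v.2.2) :
    (∀ y : (Fin Np → ℝ) × (Fin Nq → ℝ) × (Fin m → ℝ),
        A.mulVec (gC1 y) = 0 ∧
        g.mulVec (B.mulVec (gC1 y)) = 0 ∧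
        Aᵀ.mulVec (gC2 y) = (-1 : ℝ) ^ p • Bᵀ.mulVec (gᵀ.mulVec (gC3 y)))
      ↔
    (∀ (H : (Fin Np → ℝ) × (Fin Nq → ℝ) × (Fin m → ℝ) → ℝ)
        (gH1 : (Fin Np → ℝ) × (Fin Nq → ℝ) × (Fin m → ℝ) → Fin Np → ℝ)
        (gH2 : (Fin Np → ℝ) × (Fin Nq → ℝ) × (Fin m → ℝ) → Fin Nq → ℝ)
        (gH3 : (Fin Np → ℝ) × (Fin Nq → ℝ) × (Fin m → ℝ) → Fin m → ℝ),
        ContDiff ℝ 1 H →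
        (∀ y v, fderiv ℝ H y v = gH1 y ⬝ᵥ v.1 + gH2 y ⬝ᵥ v.2.1 + gH3 y ⬝ᵥ v.2.2) →
        ∀ (I : Set ℝ), I.OrdConnected →
        ∀ (x : ℝ → Fin Np → ℝ) (z : ℝ → Fin Nq → ℝ) (ζ : ℝ → Fin m → ℝ),
          (∀ t ∈ I, HasDerivAt x
            ((-1 : ℝ) ^ (q * (p + 1)) • Aᵀ.mulVec (gH2 (x t, z t, ζ t))
              + (-1 : ℝ) ^ (q * (p + 1)) • Bᵀ.mulVec (gᵀ.mulVec (gH3 (x t, z t, ζ t)))) t) →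
          (∀ t ∈ I, HasDerivAt z (-(A.mulVec (gH1 (x t, z t, ζ t)))) t) →
          (∀ t ∈ I, HasDerivAt ζ
            ((-1 : ℝ) ^ p • g.mulVec (B.mulVec (gH1 (x t, z t, ζ t)))) t) →
          ∀ s ∈ I, ∀ t ∈ I, C (x s, z s, ζ s) = C (x t, z t, ζ t)) := by
  have hε : (-1 : ℝ) ^ (q * (p + 1)) ≠ 0 := pow_ne_zero _ (by norm_num)
  have hCdiff : Differentiable ℝ C := hC.differentiable one_ne_zero
  have hgC' : ∀ y V, fderiv ℝ C y V = tripleDot (gC1 y, gC2 y, gC3 y) V := hgC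
  constructor
  · intro hker H gH1 gH2 gH3 _ _ I hI x z ζ hx hz hζ s hs t ht
    refine hI.apply_eq_apply_of_fderiv_apply_eq_zero (fun r _ => hCdiff _)
      (fun r hr => (hx r hr).prodMk ((hz r hr).prodMk (hζ r hr))) (fun r _ => ?_) hs ht
    rw [hgC']
    exact (tripleDot_closedLoopField_eq_zero_iff hε _ A B g _ _ _).2 (hker _) _ _ _
  · intro hcas y
    refine (tripleDot_closedLoopField_eq_zero_iff hε _ A B g _ _ _).1 fun a b c => ?_
    let F := closedLoopField ((-1 : ℝ) ^ (q * (p + 1))) ((-1 : ℝ) ^ p) A B g a b c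
    let H := LinearMap.toContinuousLinearMap (tripleDot (a, b, c))
    have hH : ∀ y V, fderiv ℝ H y V = a ⬝ᵥ V.1 + b ⬝ᵥ V.2.1 + c ⬝ᵥ V.2.2 := fun _ V => by
      rw [H.fderiv]; rfl
    rw [← hgC']
    refine fderiv_apply_eq_zero_of_forall_apply_add_smul_eq (hCdiff y) F fun t => ?_
    have hconst := hcas H (fun _ => a) (fun _ => b) (fun _ => c) H.contDiff hH Set.univ
      Set.ordConnected_univ (fun r => y.1 + r • F.1) (fun r => y.2.1 + r • F.2.1)
      (fun r => y.2.2 + r • F.2.2) (fun r _ => hasDerivAt_add_smul y.1 F.1 r)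
      (fun r _ => hasDerivAt_add_smul y.2.1 F.2.1 r) (fun r _ => hasDerivAt_add_smul y.2.2 F.2.2 r)
      t trivial 0 trivial
    simp only [zero_smul, add_zero] at hconst
    -- `y + t • F` unfolds componentwise to the curve fed to `hcas`
    exact hconst

/-- Casimirs of the closed-loop system, matrix form: with
ε = (−1)^{q(p+1)}, the kernel conditions A∇₁C = 0, gB∇₁C = 0 and
Aᵀ∇₂C = (−1)^p Bᵀgᵀ∇₃C (pointwise) hold iff C is constant along every solution
of the closed-loop system x' = εAᵀ∇₂H + εBᵀgᵀ∇₃H, z' = −A∇₁H, ζ' = (−1)^p gB∇₁H,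
for every C¹ closed-loop Hamiltonian H. -/
theorem closed_loop_casimir_characterization (p q Np Nq Nb m : ℕ)
    (hp : 0 < p) (hq : 0 < q)
    (A : Matrix (Fin Nq) (Fin Np) ℝ) (B : Matrix (Fin Nb) (Fin Np) ℝ)
    (g : Matrix (Fin m) (Fin Nb) ℝ)
    (C : (Fin Np → ℝ) × (Fin Nq → ℝ) × (Fin m → ℝ) → ℝ)
    (gC1 : (Fin Np → ℝ) × (Fin Nq → ℝ) × (Fin m → ℝ) → Fin Np → ℝ)
    (gC2 : (Fin Np → ℝ) × (Fin Nq → ℝ) × (Fin m → ℝ) → Fin Nq → ℝ)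
    (gC3 : (Fin Np → ℝ) × (Fin Nq → ℝ) × (Fin m → ℝ) → Fin m → ℝ)
    (hC : ContDiff ℝ 1 C)
    (hgC : ∀ y v, fderiv ℝ C y v = gC1 y ⬝ᵥ v.1 + gC2 y ⬝ᵥ v.2.1 + gC3 y ⬝ᵥ v.2.2) :
    (∀ y : (Fin Np → ℝ) × (Fin Nq → ℝ) × (Fin m → ℝ),
        A.mulVec (gC1 y) = 0 ∧
        g.mulVec (B.mulVec (gC1 y)) = 0 ∧
        Aᵀ.mulVec (gC2 y) = (-1 : ℝ) ^ p • Bᵀ.mulVec (gᵀ.mulVec (gC3 y)))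
      ↔
    (∀ (H : (Fin Np → ℝ) × (Fin Nq → ℝ) × (Fin m → ℝ) → ℝ)
        (gH1 : (Fin Np → ℝ) × (Fin Nq → ℝ) × (Fin m → ℝ) → Fin Np → ℝ)
        (gH2 : (Fin Np → ℝ) × (Fin Nq → ℝ) × (Fin m → ℝ) → Fin Nq → ℝ)
        (gH3 : (Fin Np → ℝ) × (Fin Nq → ℝ) × (Fin m → ℝ) → Fin m → ℝ),
        ContDiff ℝ 1 H →
        (∀ y v, fderiv ℝ H y v = gH1 y ⬝ᵥ v.1 + gH2 y ⬝ᵥ v.2.1 + gH3 y ⬝ᵥ v.2.2) →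
        ∀ (I : Set ℝ), I.OrdConnected →
        ∀ (x : ℝ → Fin Np → ℝ) (z : ℝ → Fin Nq → ℝ) (ζ : ℝ → Fin m → ℝ),
          (∀ t ∈ I, HasDerivAt x
            ((-1 : ℝ) ^ (q * (p + 1)) • Aᵀ.mulVec (gH2 (x t, z t, ζ t))
              + (-1 : ℝ) ^ (q * (p + 1)) • Bᵀ.mulVec (gᵀ.mulVec (gH3 (x t, z t, ζ t)))) t) →
          (∀ t ∈ I, HasDerivAt z (-(A.mulVec (gH1 (x t, z t, ζ t)))) t) →
          (∀ t ∈ I, HasDerivAt ζ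
            ((-1 : ℝ) ^ p • g.mulVec (B.mulVec (gH1 (x t, z t, ζ t)))) t) →
          ∀ s ∈ I, ∀ t ∈ I, C (x s, z s, ζ s) = C (x t, z t, ζ t)) :=
  closed_loop_casimir_characterization_general p q Np Nq Nb m A B g C gC1 gC2 gC3 hC hgC
end
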